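/- (Casorati determinant D_1, type q-A_4^{(1)}.) Suppose Y ∈ ℂ[[X]] satisfies (1−a_1X)(1−a_2X)·Y(qX) = (1−b_1X)·Y, and let (P, Q) be a Padé pair for Y. Then there exists a polynomial R ∈ ℂ[X] with deg R ≤ 1 such that (1−b_1X)·P(X)·Q(qX) − (1−a_1X)(1−a_2X)·P(qX)·Q(X) = X^{m+n+1}·R. -/

import Mathlib

/-!
Put `E = Y Q - P`, which is divisible by `X^(m+n+1)`. Using the functional equation
`A · Y(qX) = B · Y` to eliminate `Y`, the Casorati polynomial
`B P Q(qX) - A P(qX) Q` equals `A E(qX) Q - B E Q(qX)`, and rescaling preserves divisibility by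
powers of `X`; so `X^(m+n+1)` divides it. Its degree is at most `m + n + 2`, which leaves a
quotient of degree at most `1`.
-/

open Polynomial

namespace Polynomial

variable {R : Type*}

theorem coe_comp_C_mul_X [CommSemiring R] (p : R[X]) (a : R) :
    ((p.comp (C a * X) : R[X]) : PowerSeries R) = PowerSeries.rescale a (p : PowerSeries R) := by
  ext k
  rw [PowerSeries.coeff_rescale, coeff_coe, coeff_coe, comp_C_mul_X_coeff, mul_comm]

theorem natDegree_comp_C_mul_X_le [CommSemiring R] (p : R[X]) (a : R) :
    (p.comp (C a * X)).natDegree ≤ p.natDegree :=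
  natDegree_le_iff_coeff_eq_zero.2 fun k hk => by
    rw [comp_C_mul_X_coeff, coeff_eq_zero_of_natDegree_lt hk, zero_mul]

theorem natDegree_casorati_le [CommRing R] {A B P Q : R[X]} {a : R} {m n : ℕ}
    (hA : A.natDegree ≤ 2) (hB : B.natDegree ≤ 1) (hP : P.natDegree ≤ m) (hQ : Q.natDegree ≤ n) :
    (B * P * Q.comp (C a * X) - A * P.comp (C a * X) * Q).natDegree ≤ m + n + 2 :=
  (natDegree_sub_le_of_le
    (natDegree_mul_le_of_le (natDegree_mul_le_of_le hB hP)
      ((natDegree_comp_C_mul_X_le Q a).trans hQ))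
    (natDegree_mul_le_of_le (natDegree_mul_le_of_le hA ((natDegree_comp_C_mul_X_le P a).trans hP))
      hQ)).trans (by omega)

theorem X_pow_dvd_coe_iff [Semiring R] {p : R[X]} {n : ℕ} :
    (PowerSeries.X : PowerSeries R) ^ n ∣ (p : PowerSeries R) ↔ X ^ n ∣ p := by
  simp only [PowerSeries.X_pow_dvd_iff, X_pow_dvd_iff, coeff_coe]

theorem degree_le_of_natDegree_X_pow_mul_le [Semiring R] [Nontrivial R] {p : R[X]} {n k : ℕ}
    (h : (X ^ n * p).natDegree ≤ n + k) : p.degree ≤ k := by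
  rcases eq_or_ne p 0 with rfl | hp
  · simp
  · rw [natDegree_X_pow_mul n hp] at h
    exact degree_le_of_natDegree_le (by omega)

end Polynomial

namespace PowerSeries

variable {R : Type*}

theorem X_pow_dvd_rescale [CommSemiring R] {f : PowerSeries R} {n : ℕ} (a : R) (h : X ^ n ∣ f) :
    X ^ n ∣ rescale a f := by
  rw [X_pow_dvd_iff] at h ⊢
  intro k hk
  rw [coeff_rescale, h k hk, mul_zero]

theorem X_pow_dvd_casorati [CommRing R] {A B Y P Q : PowerSeries R} {a : R} {n : ℕ}
    (hY : A * rescale a Y = B * Y) (hPade : X ^ n ∣ Y * Q - P) :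
    X ^ n ∣ B * P * rescale a Q - A * rescale a P * Q := by
  have casorati : B * P * rescale a Q - A * rescale a P * Q =
      A * rescale a (Y * Q - P) * Q - B * (Y * Q - P) * rescale a Q := by
    rw [map_sub, map_mul]
    linear_combination -(Q * rescale a Q) * hY
  rw [casorati]
  exact dvd_sub (dvd_mul_of_dvd_left (dvd_mul_of_dvd_right (X_pow_dvd_rescale a hPade) _) _)
    (dvd_mul_of_dvd_left (dvd_mul_of_dvd_right hPade _) _)

end PowerSeries

/-- Casorati determinant `D_1` for type q-A_4^{(1)}. -/
theorem casorati_D1_qA4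
    (q a1 a2 b1 : ℂ) (m n : ℕ)
    (Y : PowerSeries ℂ)
    (hY : (1 - PowerSeries.C a1 * PowerSeries.X) * (1 - PowerSeries.C a2 * PowerSeries.X) *
        PowerSeries.rescale q Y =
      (1 - PowerSeries.C b1 * PowerSeries.X) * Y)
    (P Q : Polynomial ℂ) (hdP : P.degree ≤ m) (hdQ : Q.degree ≤ n)
    (hPade : (PowerSeries.X : PowerSeries ℂ) ^ (m + n + 1) ∣
      Y * (Q : PowerSeries ℂ) - (P : PowerSeries ℂ)) :
    ∃ R : Polynomial ℂ, R.degree ≤ 1 ∧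
      (1 - C b1 * X) * P * (Q.comp (C q * X)) -
          (1 - C a1 * X) * (1 - C a2 * X) * (P.comp (C q * X)) * Q =
        X ^ (m + n + 1) * R := by
  obtain ⟨R, hR⟩ : X ^ (m + n + 1) ∣ (1 - C b1 * X) * P * (Q.comp (C q * X)) -
      (1 - C a1 * X) * (1 - C a2 * X) * (P.comp (C q * X)) * Q := by
    rw [← X_pow_dvd_coe_iff]
    push_cast [coe_comp_C_mul_X]
    exact PowerSeries.X_pow_dvd_casorati hY hPade
  have hA : ((1 - C a1 * X) * (1 - C a2 * X) : ℂ[X]).natDegree ≤ 2 := by compute_degree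
  have hB : (1 - C b1 * X : ℂ[X]).natDegree ≤ 1 := by compute_degree
  have hD := natDegree_casorati_le (a := q) hA hB (natDegree_le_of_degree_le hdP)
    (natDegree_le_of_degree_le hdQ)
  rw [hR] at hD
  exact ⟨R, degree_le_of_natDegree_X_pow_mul_le hD, hR⟩
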